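/- arXiv:1603.05748 — 6 statements merged into one kernel-verified Lean document; each statement's English description precedes it below -/
import Mathlib

section
/- Let B(j,q) = (q/j)·C(2j, j−q) denote the Catalan triangle numbers and for integers j ≥ 1 and k ≥ j set c(j,k) = (j!/(2j−1)!)·∑_{q=1}^{j} (−1)^{q+j} B(j,q) q^{2k−1}, extended by c(0,k) = 0 for all k ≥ 1. Then c(1,1) = 1 and the recurrence c(j, k+1) = j²·c(j,k) + j·c(j−1,k) holds for all j ≥ 1 and k ≥ j. -/
/-- The Catalan triangle numbers `B(j,q) = (q/j) * C(2j, j-q)`. -/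
noncomputable def catalanTriangle (j q : ℕ) : ℚ :=
  ((q : ℚ) / (j : ℚ)) * (Nat.choose (2 * j) (j - q) : ℚ)

/-- The coefficients `c(j,k) = (j!/(2j-1)!) * ∑_{q=1}^{j} (-1)^(q+j) B(j,q) q^(2k-1)`.
For `j = 0` the sum is empty, so `c(0,k) = 0`. -/
noncomputable def tuenterCoeff (j k : ℕ) : ℚ :=
  ((Nat.factorial j : ℚ) / (Nat.factorial (2 * j - 1) : ℚ)) *
    ∑ q ∈ Finset.Icc 1 j, (-1 : ℚ) ^ (q + j) * catalanTriangle j q * (q : ℚ) ^ (2 * k - 1)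

/-!
Subtracting `j² c(j,k)` from `c(j,k+1)` multiplies the `q`-th summand by `q² - j²`, which kills
the summand `q = j`. For `q < j` the identity
`C(2j, j-q) (j-q) (j+q) = 2j (2j-1) C(2j-2, j-1-q)` turns `(j!/(2j-1)!) B(j,q) (j² - q²)` into
`j ((j-1)!/(2j-3)!) B(j-1,q)`, while the sign `(-1)^(q+j)` flips to `-(-1)^(q+j-1)`;
what remains is `j c(j-1,k)`.
-/

theorem Nat.choose_add_two_succ_mul_mul_sub (m r : ℕ) :
    (m + 2).choose (r + 1) * (r + 1) * (m + 1 - r) = (m + 2) * (m + 1) * m.choose r := by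
  rw [← Nat.add_one_mul_choose_eq, mul_assoc, ← Nat.choose_mul_succ_eq]
  ring

theorem tuenterCoeff_one_one : tuenterCoeff 1 1 = 1 := by
  simp [tuenterCoeff, catalanTriangle]

theorem factorial_div_mul_catalanTriangle_mul_sq_sub_sq {n q : ℕ} (hqn : q ≤ n) :
    ((n + 1).factorial / (2 * (n + 1) - 1).factorial : ℚ) * catalanTriangle (n + 1) q *
        (((n + 1 : ℕ) : ℚ) ^ 2 - (q : ℚ) ^ 2) =
      (n + 1 : ℕ) * ((n.factorial / (2 * n - 1).factorial : ℚ) * catalanTriangle n q) := by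
  rcases Nat.eq_zero_or_pos q with rfl | hq
  · simp [catalanTriangle]
  obtain ⟨r, rfl⟩ := Nat.exists_eq_add_of_le hqn
  obtain ⟨p, rfl⟩ := Nat.exists_eq_add_of_le' hq
  have hbinom := congrArg (Nat.cast (R := ℚ))
    (Nat.choose_add_two_succ_mul_mul_sub (2 * (p + 1 + r)) r)
  rw [show 2 * (p + 1 + r) + 1 - r = 2 * p + r + 3 by omega] at hbinom
  rw [show 2 * (p + 1 + r + 1) - 1 = 2 * (p + 1 + r) + 1 by omega,
    show 2 * (p + 1 + r) - 1 = 2 * p + 2 * r + 1 by omega,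
    show 2 * (p + 1 + r) + 1 = (2 * p + 2 * r + 1) + 1 + 1 by omega,
    Nat.factorial_succ (2 * p + 2 * r + 1 + 1), Nat.factorial_succ (2 * p + 2 * r + 1),
    Nat.factorial_succ (p + 1 + r)]
  simp only [catalanTriangle, show p + 1 + r + 1 - (p + 1) = r + 1 by omega,
    show p + 1 + r - (p + 1) = r by omega, show 2 * (p + 1 + r + 1) = 2 * (p + 1 + r) + 2 by ring]
  push_cast at hbinom ⊢
  field_simp
  linear_combination ((p : ℚ) + 1 + r) * hbinom

theorem tuenterCoeff_succ_succ_right {n k : ℕ} (hk : 1 ≤ k) :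
    tuenterCoeff (n + 1) (k + 1) =
      ((n + 1 : ℕ) : ℚ) ^ 2 * tuenterCoeff (n + 1) k +
        ((n + 1 : ℕ) : ℚ) * tuenterCoeff n k := by
  rw [← sub_eq_iff_eq_add']
  simp only [tuenterCoeff, Finset.mul_sum, ← Finset.sum_sub_distrib,
    show 2 * (k + 1) - 1 = 2 * k - 1 + 2 by omega]
  rw [Finset.sum_Icc_succ_top (by omega), sub_eq_zero_of_eq (by ring), add_zero]
  refine Finset.sum_congr rfl fun q hq => ?_
  rw [Finset.mem_Icc] at hq
  linear_combination ((-1 : ℚ) ^ (q + n) * (q : ℚ) ^ (2 * k - 1)) *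
    factorial_div_mul_catalanTriangle_mul_sq_sub_sq hq.2

theorem stmt_0 :
    tuenterCoeff 1 1 = 1 ∧
    ∀ j : ℕ, 1 ≤ j → ∀ k : ℕ, j ≤ k →
      tuenterCoeff j (k + 1) =
        (j : ℚ) ^ 2 * tuenterCoeff j k + (j : ℚ) * tuenterCoeff (j - 1) k := by
  refine ⟨tuenterCoeff_one_one, fun j hj k hjk => ?_⟩
  obtain ⟨n, rfl⟩ := Nat.exists_eq_add_of_le' hj
  exact tuenterCoeff_succ_succ_right (hj.trans hjk)
end

section
/- For every k ≥ 1 and every natural number n, the Tuenter polynomial satisfies P_k(n) = ∑_{j=1}^{k} c(j,k)·(n)_j, where c(j,k) = (j!/(2j−1)!)·∑_{q=1}^{j} (−1)^{q+j} B(j,q) q^{2k−1} with B(j,q) = (q/j)·C(2j, j−q), and (n)_j = n(n−1)(n−2)⋯(n−j+1) is the descending factorial. -/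
/-- The Tuenter polynomials: `P 0 n = 1`,
`P (k+1) n = n^2 * (P k n - P k (n-1)) + n * P k (n-1)`. -/
def tuenterP : ℕ → ℤ → ℤ
  | 0, _ => 1
  | k + 1, n => n ^ 2 * (tuenterP k n - tuenterP k (n - 1)) + n * tuenterP k (n - 1)

/-!
The recursion reads `P_{k+1}(x) = x² P_k(x) - (x² - x) P_k(x - 1)`, and it sends the falling
factorial `(x)_j` to `j² (x)_j + (j + 1) (x)_{j+1}`. So the expansion propagates from `k` to `k + 1`
as soon as `c(j, k+1) = j² c(j, k) + j c(j-1, k)` and `c(k+1, k) = 0`.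

Since `B(j, q) q^(2k-1) = (1/j) C(2j, j-q) q^(2k)`, the coefficient `c(j, k)` is a multiple of the
moment `S(j, 2k) = ∑_q (-1)^(q+j) C(2j, j-q) q^(2k)`. The recursion for `c` comes from
`((j+1)² - q²) C(2j+2, j+1-q) = (2j+2)(2j+1) C(2j, j-q)`. For even `e > 0` the summand of
`∑_i (-1)^i C(2j, i) (j - i)^e` is symmetric under `i ↦ 2j - i` and vanishes at `i = j`, so this
sum is `2 S(j, e)`; being a `2j`-th finite difference of a polynomial of degree `e`, it is zero
when `e < 2j`.
-/

open Finset Polynomial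
open scoped Nat

theorem Nat.add_two_mul_add_one_mul_choose (n k : ℕ) :
    (n + 2) * (n + 1) * n.choose k = (k + 1) * (n + 1 - k) * (n + 2).choose (k + 1) :=
  calc (n + 2) * (n + 1) * n.choose k = (n + 2) * (n.choose k * (n + 1)) := by ring
    _ = (n + 2) * (n + 1).choose k * (n + 1 - k) := by rw [Nat.choose_mul_succ_eq]; ring
    _ = (k + 1) * (n + 1 - k) * (n + 2).choose (k + 1) := by
      rw [Nat.add_one_mul_choose_eq]; ring

theorem neg_one_pow_sub_eq_pow_add {R : Type*} [Monoid R] [HasDistribNeg R] {a b : ℕ}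
    (h : a ≤ b) : (-1 : R) ^ (b - a) = (-1) ^ (b + a) := by
  rw [show b + a = b - a + 2 * a by omega, pow_add, pow_mul, neg_one_sq, one_pow, mul_one]

theorem Finset.sum_Icc_one_eq_sum_range {M : Type*} [AddCommMonoid M] (f : ℕ → M) (n : ℕ) :
    ∑ i ∈ Icc 1 n, f i = ∑ i ∈ range n, f (i + 1) := by
  rw [range_eq_Ico, sum_Ico_add' f, zero_add, Finset.Ico_add_one_right_eq_Icc]

theorem Finset.sum_range_two_mul_add_one {M : Type*} [AddCommMonoid M] (f : ℕ → M) (n : ℕ) :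
    ∑ i ∈ range (2 * n + 1), f i = f n + ∑ i ∈ range n, (f (n - 1 - i) + f (n + 1 + i)) := by
  rw [two_mul, add_assoc, sum_range_add, sum_range_succ', sum_add_distrib, sum_range_reflect]
  simp only [add_zero]
  ac_rfl

theorem sum_range_neg_one_pow_mul_choose_mul_pow_eq_zero {R : Type*} [CommRing R] {e n : ℕ}
    (h : e < n) (a : R) :
    ∑ i ∈ range (n + 1), (-1) ^ i * (n.choose i : R) * (a - i) ^ e = 0 := by
  have := congrFun (fwdDiff_iter_pow_eq_zero_of_lt (R := R) h) (a - n)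
  rw [fwdDiff_iter_eq_sum_shift, ← sum_range_reflect, Pi.zero_apply] at this
  rw [← this]
  refine sum_congr rfl fun i hi => ?_
  have hi : i ≤ n := Nat.lt_succ_iff.mp (mem_range.mp hi)
  rw [Nat.add_sub_cancel, Nat.sub_sub_self hi, Nat.choose_symm hi, nsmul_one, Nat.cast_sub hi,
    zsmul_eq_mul]
  push_cast
  ring

def centralBinomMoment (j e : ℕ) : ℚ :=
  ∑ q ∈ Icc 1 j, (-1 : ℚ) ^ (q + j) * ((2 * j).choose (j - q) : ℚ) * (q : ℚ) ^ e

theorem centralBinomMoment_eq_zero {j e : ℕ} (he : Even e) (he₀ : e ≠ 0) (hej : e < 2 * j) :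
    centralBinomMoment j e = 0 := by
  set g : ℕ → ℚ := fun i => (-1) ^ i * ((2 * j).choose i : ℚ) * ((j : ℚ) - i) ^ e with hg
  have hsum : ∑ i ∈ range (2 * j + 1), g i = 0 :=
    sum_range_neg_one_pow_mul_choose_mul_pow_eq_zero hej (j : ℚ)
  have hcenter : g j = 0 := by simp [hg, zero_pow he₀]
  have hpair : ∀ q ∈ range j, g (j - 1 - q) + g (j + 1 + q) = 2 *
      ((-1 : ℚ) ^ (q + 1 + j) * ((2 * j).choose (j - (q + 1)) : ℚ) * ((q + 1 : ℕ) : ℚ) ^ e) := by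
    intro q hq
    have hqj : q + 1 ≤ j := mem_range.mp hq
    have hlow : j - 1 - q = j - (q + 1) := by omega
    have hsymm : (2 * j).choose (j + 1 + q) = (2 * j).choose (j - (q + 1)) :=
      Nat.choose_symm_of_eq_add (by omega)
    have hsign : (-1 : ℚ) ^ (j + 1 + q) = (-1) ^ (q + 1 + j) := by ring_nf
    simp only [hg, hlow, hsymm, hsign, neg_one_pow_sub_eq_pow_add hqj, Nat.cast_sub hqj]
    rw [show (j : ℚ) - (j + 1 + q : ℕ) = -((q + 1 : ℕ) : ℚ) by push_cast; ring, he.neg_pow]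
    push_cast
    ring
  rw [sum_range_two_mul_add_one, hcenter, zero_add, sum_congr rfl hpair, ← mul_sum] at hsum
  rw [centralBinomMoment, sum_Icc_one_eq_sum_range]
  simpa using hsum

theorem centralBinomMoment_succ_add_two (j e : ℕ) :
    centralBinomMoment (j + 1) (e + 2) =
      (j + 1) ^ 2 * centralBinomMoment (j + 1) e +
        (2 * j + 2) * (2 * j + 1) * centralBinomMoment j e := by
  have hterm : ∀ q ∈ Icc 1 j,
      (-1 : ℚ) ^ (q + (j + 1)) * ((2 * (j + 1)).choose (j + 1 - q) : ℚ) * (q : ℚ) ^ (e + 2) =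
        (j + 1) ^ 2 *
            ((-1 : ℚ) ^ (q + (j + 1)) * ((2 * (j + 1)).choose (j + 1 - q) : ℚ) * (q : ℚ) ^ e) +
          (2 * j + 2) * (2 * j + 1) *
            ((-1 : ℚ) ^ (q + j) * ((2 * j).choose (j - q) : ℚ) * (q : ℚ) ^ e) := by
    intro q hq
    obtain ⟨d, rfl⟩ := Nat.exists_eq_add_of_le (mem_Icc.mp hq).2
    have hchoose := Nat.add_two_mul_add_one_mul_choose (2 * (q + d)) d
    rw [show 2 * (q + d) + 1 - d = q + d + 1 + q by omega] at hchoose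
    rw [show q + d + 1 - q = d + 1 by omega, show q + d - q = d by omega,
      show 2 * (q + d + 1) = 2 * (q + d) + 2 by ring]
    have hchoose' := congrArg (Nat.cast : ℕ → ℚ) hchoose
    push_cast at hchoose' ⊢
    linear_combination -(-1 : ℚ) ^ (q + q + d) * (q : ℚ) ^ e * hchoose'
  rw [centralBinomMoment, centralBinomMoment, centralBinomMoment, sum_Icc_succ_top (by omega),
    sum_Icc_succ_top (by omega), sum_congr rfl hterm, sum_add_distrib, ← mul_sum, ← mul_sum]
  simp only [Nat.sub_self, Nat.choose_zero_right]
  push_cast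
  ring

@[simp]
theorem tuenterCoeff_zero_left (k : ℕ) : tuenterCoeff 0 k = 0 := by
  simp [tuenterCoeff]

@[simp]
theorem tuenterCoeff_one_left (k : ℕ) : tuenterCoeff 1 k = 1 := by
  simp [tuenterCoeff, catalanTriangle]

theorem tuenterCoeff_eq_centralBinomMoment (j k : ℕ) :
    tuenterCoeff j (k + 1) = ((j - 1)! / (2 * j - 1)! : ℚ) * centralBinomMoment j (2 * k + 2) := by
  rw [tuenterCoeff, centralBinomMoment, show 2 * (k + 1) - 1 = 2 * k + 1 by omega, mul_sum,
    mul_sum]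
  refine sum_congr rfl fun q hq => ?_
  have hj : j ≠ 0 := by have := mem_Icc.mp hq; omega
  rw [catalanTriangle, ← Nat.mul_factorial_pred hj]
  push_cast
  field_simp
  ring

theorem tuenterCoeff_succ_succ (j k : ℕ) :
    tuenterCoeff j (k + 2) = j ^ 2 * tuenterCoeff j (k + 1) + j * tuenterCoeff (j - 1) (k + 1) := by
  rcases j with _ | _ | i
  · simp
  · simp
  · rw [tuenterCoeff_eq_centralBinomMoment, tuenterCoeff_eq_centralBinomMoment,
      tuenterCoeff_eq_centralBinomMoment, show 2 * (k + 1) + 2 = 2 * k + 2 + 2 by ring,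
      centralBinomMoment_succ_add_two]
    simp only [show 2 * (i + 1 + 1) - 1 = 2 * i + 1 + 1 + 1 by omega,
      Nat.add_sub_cancel, show 2 * (i + 1) - 1 = 2 * i + 1 by omega, Nat.factorial_succ]
    push_cast
    field_simp
    ring

theorem tuenterCoeff_eq_zero_of_lt {j k : ℕ} (h : k + 1 < j) : tuenterCoeff j (k + 1) = 0 := by
  rw [tuenterCoeff_eq_centralBinomMoment,
    centralBinomMoment_eq_zero ⟨k + 1, by ring⟩ (by omega) (by omega), mul_zero]

theorem descPochhammer_eval_tuenter_step {R : Type*} [CommRing R] (j : ℕ) (x : R) :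
    x ^ 2 * (descPochhammer R j).eval x - (x ^ 2 - x) * (descPochhammer R j).eval (x - 1) =
      j ^ 2 * (descPochhammer R j).eval x + (j + 1) * (descPochhammer R (j + 1)).eval x := by
  have hleft : x * (descPochhammer R j).eval (x - 1) = (descPochhammer R (j + 1)).eval x := by
    simp [descPochhammer_succ_left, eval_comp]
  have hright := descPochhammer_succ_eval j x
  linear_combination (1 - x) * hleft - (x + j) * hright

theorem tuenterP_succ (k : ℕ) (x : ℤ) :
    tuenterP (k + 1) x = x ^ 2 * tuenterP k x - (x ^ 2 - x) * tuenterP k (x - 1) := by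
  rw [tuenterP]
  ring

theorem tuenterP_succ_eq_sum_range (k : ℕ) (x : ℤ) :
    (tuenterP (k + 1) x : ℚ) =
      ∑ j ∈ range (k + 2), tuenterCoeff j (k + 1) * (descPochhammer ℚ j).eval (x : ℚ) := by
  induction k generalizing x with
  | zero => simp [tuenterP, sum_range_succ]
  | succ k ih =>
    set X : ℚ := (x : ℚ)
    calc (tuenterP (k + 2) x : ℚ)
        = X ^ 2 * tuenterP (k + 1) x - (X ^ 2 - X) * tuenterP (k + 1) (x - 1) := by
          rw [tuenterP_succ]; push_cast; rfl
      _ = ∑ j ∈ range (k + 2), tuenterCoeff j (k + 1) * (X ^ 2 * (descPochhammer ℚ j).eval X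
            - (X ^ 2 - X) * (descPochhammer ℚ j).eval (X - 1)) := by
          rw [ih, ih, mul_sum, mul_sum, ← sum_sub_distrib]
          push_cast
          exact sum_congr rfl fun j _ => by ring
      _ = ∑ j ∈ range (k + 2), (j ^ 2 * tuenterCoeff j (k + 1) * (descPochhammer ℚ j).eval X
            + (j + 1) * tuenterCoeff j (k + 1) * (descPochhammer ℚ (j + 1)).eval X) := by
          refine sum_congr rfl fun j _ => ?_
          rw [descPochhammer_eval_tuenter_step]
          ring
      _ = ∑ j ∈ range (k + 3), tuenterCoeff j (k + 2) * (descPochhammer ℚ j).eval X := by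
          simp only [tuenterCoeff_succ_succ, add_mul, sum_add_distrib]
          rw [sum_range_succ _ (k + 2), sum_range_succ' _ (k + 2),
            tuenterCoeff_eq_zero_of_lt (by omega)]
          push_cast
          simp only [add_mul, one_mul, mul_zero, zero_mul, add_zero, sum_add_distrib]

theorem stmt_1 :
    ∀ k : ℕ, 1 ≤ k → ∀ n : ℕ,
      (tuenterP k (n : ℤ) : ℚ) =
        ∑ j ∈ Finset.Icc 1 k, tuenterCoeff j k * (descPochhammer ℚ j).eval (n : ℚ) := by
  intro k hk n
  obtain ⟨k, rfl⟩ := Nat.exists_eq_add_of_le' hk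
  rw [tuenterP_succ_eq_sum_range, sum_range_succ', sum_Icc_one_eq_sum_range,
    tuenterCoeff_zero_left, zero_mul, add_zero, Int.cast_natCast]
end

section
/- For every k ≥ 0 and every positive integer n, S_{2k+1}(n) = P_k(n)·n·C(2n, n), where S_r(n) = ∑_{j=0}^{2n} C(2n, j)·|n−j|^r and P_k is the k-th Tuenter polynomial. -/
/-- `S r n = ∑_{j=0}^{2n} C(2n, j) |n - j|^r`. -/
def S (r n : ℕ) : ℤ :=
  ∑ j ∈ Finset.range (2 * n + 1), (Nat.choose (2 * n) j : ℤ) * |(n : ℤ) - (j : ℤ)| ^ r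

/-!
Since `|x|^(r+2) = x^2 |x|^r` and `(n+1)^2 - (n+1-j)^2 = j (2n+2-j)`, the identity
`j (2n+2-j) C(2n+2, j) = (2n+2)(2n+1) C(2n, j-1)` gives
`S_{r+2}(n+1) = (n+1)^2 S_r(n+1) - 2(n+1)(2n+1) S_r(n)`. Combined with
`(n+1) C(2n+2, n+1) = 2(2n+1) C(2n, n)`, this is exactly the Tuenter recursion for
`S_{2k+1}(n) / (n C(2n, n))`. For the base case, expanding `C(2n+2, j)` by Pascal's rule twice and
using `|d+1| + 2|d| + |d-1| = 4|d| + 2[d = 0]` gives `S_1(n+1) = 4 S_1(n) + 2 C(2n, n)`.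
-/

open Finset

theorem Finset.sum_range_choose_succ_mul {R : Type*} [NonAssocSemiring R] (m : ℕ) (f : ℕ → R) :
    ∑ j ∈ range (m + 2), ((m + 1).choose j : R) * f j =
      ∑ j ∈ range (m + 1), (m.choose j : R) * (f j + f (j + 1)) := by
  simp only [mul_add, sum_add_distrib]
  exact sum_choose_succ_mul (fun j _ => f j) m

theorem Finset.sum_range_choose_add_two_mul {R : Type*} [NonAssocSemiring R] (m : ℕ)
    (f : ℕ → R) :
    ∑ j ∈ range (m + 3), ((m + 2).choose j : R) * f j =
      ∑ j ∈ range (m + 1), (m.choose j : R) * (f j + 2 * f (j + 1) + f (j + 2)) := by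
  rw [sum_range_choose_succ_mul, sum_range_choose_succ_mul]
  refine sum_congr rfl fun j _ => ?_
  rw [two_mul, ← add_assoc, add_assoc (f j)]

theorem Nat.choose_succ_mul_mul_sub (m i : ℕ) :
    (m + 2).choose (i + 1) * (i + 1) * (m + 1 - i) = (m + 2) * (m + 1) * m.choose i := by
  rw [← add_one_mul_choose_eq, mul_assoc, ← choose_mul_succ_eq]
  ring

theorem Finset.sum_range_choose_mul_mul_sub {R : Type*} [CommRing R] (m : ℕ) (g : ℕ → R) :
    ∑ j ∈ range (m + 3), ((m + 2).choose j : R) * ((j : R) * ((m : R) + 2 - j)) * g j =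
      ((m : R) + 2) * ((m : R) + 1) * ∑ i ∈ range (m + 1), (m.choose i : R) * g (i + 1) := by
  rw [sum_range_succ', sum_range_succ, mul_sum]
  simp only [Nat.cast_zero, zero_mul, mul_zero, add_zero, Nat.cast_add, Nat.cast_one, add_assoc,
    one_add_one_eq_two, Nat.cast_ofNat, sub_self]
  refine sum_congr rfl fun i hi => ?_
  have hle : i ≤ m + 1 := by rw [mem_range] at hi; omega
  have h := congrArg (Nat.cast : ℕ → R) (Nat.choose_succ_mul_mul_sub m i)
  push_cast [Nat.cast_sub hle] at h
  linear_combination g (i + 1) * h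

theorem Int.abs_add_one_add_abs_sub_one (d : ℤ) :
    |d + 1| + |d - 1| = 2 * |d| + if d = 0 then 2 else 0 := by
  rcases lt_trichotomy d 0 with h | rfl | h
  · rw [abs_of_neg h, abs_of_nonpos (by omega), abs_of_neg (by omega), if_neg h.ne]
    ring
  · norm_num
  · rw [abs_of_pos h, abs_of_pos (by omega), abs_of_nonneg (by omega), if_neg h.ne']
    ring

theorem Int.succ_mul_choose_two_mul_succ (m : ℕ) :
    ((m : ℤ) + 1) * (2 * (m + 1)).choose (m + 1) = 2 * (2 * m + 1) * (2 * m).choose m := by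
  exact_mod_cast Nat.succ_mul_centralBinom_succ m

theorem S_succ (r m : ℕ) :
    S r (m + 1) = ∑ j ∈ range (2 * m + 3), ((2 * m + 2).choose j : ℤ) * |(m : ℤ) + 1 - j| ^ r := by
  simp only [S, Nat.cast_add, Nat.cast_one]
  rfl

theorem S_one_succ (n : ℕ) : S 1 (n + 1) = 4 * S 1 n + 2 * (2 * n).choose n := by
  have hsum : ∀ j ∈ range (2 * n + 1),
      ((2 * n).choose j : ℤ) * (|(n : ℤ) + 1 - j| ^ 1 + 2 * |(n : ℤ) + 1 - (j + 1 : ℕ)| ^ 1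
        + |(n : ℤ) + 1 - (j + 2 : ℕ)| ^ 1) =
      4 * (((2 * n).choose j : ℤ) * |(n : ℤ) - j| ^ 1) +
        if n = j then 2 * ((2 * n).choose n : ℤ) else 0 := by
    intro j _
    have h := Int.abs_add_one_add_abs_sub_one ((n : ℤ) - j)
    simp only [sub_eq_zero, Nat.cast_inj] at h
    push_cast
    rw [show (n : ℤ) + 1 - j = n - j + 1 by ring, show (n : ℤ) + 1 - (j + 1) = n - j by ring,
      show (n : ℤ) + 1 - (j + 2) = n - j - 1 by ring]
    split_ifs at h ⊢ with hnj
    · subst hnj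
      linear_combination ((2 * n).choose n : ℤ) * h
    · linear_combination ((2 * n).choose j : ℤ) * h
  rw [S_succ, sum_range_choose_add_two_mul, sum_congr rfl hsum, sum_add_distrib, ← mul_sum,
    sum_ite_eq, if_pos (mem_range.2 (by omega)), S]

theorem S_one (n : ℕ) : S 1 n = n * (2 * n).choose n := by
  induction n with
  | zero => simp [S]
  | succ n ih =>
    rw [S_one_succ, ih, Nat.cast_succ, Int.succ_mul_choose_two_mul_succ]
    ring

theorem S_add_two_succ (r m : ℕ) :
    S (r + 2) (m + 1) =
      ((m : ℤ) + 1) ^ 2 * S r (m + 1) - 2 * ((m : ℤ) + 1) * (2 * m + 1) * S r m := by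
  have hsq : ∀ j : ℕ, |(m : ℤ) + 1 - j| ^ (r + 2) =
      ((m : ℤ) + 1) ^ 2 * |(m : ℤ) + 1 - j| ^ r - j * (2 * m + 2 - j) * |(m : ℤ) + 1 - j| ^ r := by
    intro j
    rw [pow_add, sq_abs]
    ring
  have hshift : ∑ j ∈ range (2 * m + 3),
      ((2 * m + 2).choose j : ℤ) * (j * (2 * m + 2 - j)) * |(m : ℤ) + 1 - j| ^ r =
      (2 * m + 2) * (2 * m + 1) * S r m := by
    have h := sum_range_choose_mul_mul_sub (2 * m) (fun j => |(m : ℤ) + 1 - j| ^ r)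
    push_cast [add_sub_add_right_eq_sub] at h
    exact h
  calc S (r + 2) (m + 1)
      = ((m : ℤ) + 1) ^ 2 * S r (m + 1) - ∑ j ∈ range (2 * m + 3),
          ((2 * m + 2).choose j : ℤ) * (j * (2 * m + 2 - j)) * |(m : ℤ) + 1 - j| ^ r := by
        rw [S_succ, S_succ, mul_sum, ← sum_sub_distrib]
        refine sum_congr rfl fun j _ => ?_
        rw [hsq]
        ring
    _ = _ := by
        rw [hshift]
        ring

theorem S_two_mul_add_one (k n : ℕ) :
    S (2 * k + 1) n = tuenterP k n * n * (2 * n).choose n := by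
  induction k generalizing n with
  | zero => simp [S_one, tuenterP]
  | succ k ih =>
    cases n with
    | zero => simp [S]
    | succ m =>
      have hP : tuenterP (k + 1) ((m + 1 : ℕ) : ℤ) = ((m : ℤ) + 1) ^ 2 *
          (tuenterP k ((m + 1 : ℕ) : ℤ) - tuenterP k m) + ((m : ℤ) + 1) * tuenterP k m := by
        rw [tuenterP]
        push_cast
        rw [add_sub_cancel_right]
      rw [show 2 * (k + 1) + 1 = 2 * k + 1 + 2 by ring, S_add_two_succ, ih, ih, hP]
      push_cast
      linear_combination (m * ((m : ℤ) + 1) * tuenterP k m) * Int.succ_mul_choose_two_mul_succ m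

theorem stmt_3 :
    ∀ k : ℕ, ∀ n : ℕ, 1 ≤ n →
      S (2 * k + 1) n = tuenterP k (n : ℤ) * (n : ℤ) * (Nat.choose (2 * n) n : ℤ) :=
  fun k n _ => S_two_mul_add_one k n
end

section
/- For every odd integer r ≥ 1 and every positive integer n, the sums S_r(n) = ∑_{j=0}^{2n} C(2n, j)·|n−j|^r satisfy the recurrence S_{r+2}(n) = n²·S_r(n) − 2n(2n−1)·S_r(n−1). -/
open Finset

section Absorption

variable {R : Type*} [CommRing R]

/-- Valid for every `i` thanks to the vanishing of out-of-range binomial coefficients. -/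
lemma choose_add_two_mul_mul_sub (N i : ℕ) :
    ((N + 2).choose (i + 1) : R) * ((i + 1) * (N + 1 - i)) = (N + 2) * (N + 1) * N.choose i := by
  have hsucc : ((N + 2).choose (i + 1) : R) * (i + 1) = (N + 2) * (N + 1).choose i := by
    have h := congrArg (Nat.cast : ℕ → R) (Nat.add_one_mul_choose_eq (N + 1) i)
    push_cast at h
    linear_combination -h
  have hsub : ((N + 1).choose i : R) * (N + 1 - i) = (N + 1) * N.choose i := by
    rcases le_or_gt i (N + 1) with hi | hi
    · have h := congrArg (Nat.cast : ℕ → R) (Nat.choose_mul_succ_eq N i)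
      push_cast [hi] at h
      linear_combination -h
    · simp [Nat.choose_eq_zero_of_lt hi, Nat.choose_eq_zero_of_lt (by omega : N < i)]
  linear_combination (N + 1 - (i : R)) * hsucc + (N + 2) * hsub

lemma sum_choose_mul_mul_sub (N : ℕ) (f : ℕ → R) :
    ∑ j ∈ range (N + 3), ((N + 2).choose j : R) * (j * (N + 2 - j)) * f j
      = (N + 2) * (N + 1) * ∑ i ∈ range (N + 1), (N.choose i : R) * f (i + 1) := by
  rw [sum_range_succ, sum_range_succ', mul_sum]
  have hterm : ∀ i ∈ range (N + 1),
      ((N + 2).choose (i + 1) : R) * ((i + 1 : ℕ) * (N + 2 - (i + 1 : ℕ))) * f (i + 1)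
        = (N + 2) * (N + 1) * ((N.choose i : R) * f (i + 1)) := by
    intro i _
    push_cast
    linear_combination f (i + 1) * choose_add_two_mul_mul_sub (R := R) N i
  rw [sum_congr rfl hterm]
  push_cast
  ring

end Absorption

lemma S_add_two (r m : ℕ) :
    S (r + 2) (m + 1) = ((m : ℤ) + 1) ^ 2 * S r (m + 1) - (2 * m + 2) * (2 * m + 1) * S r m := by
  have hshift : ∑ j ∈ range (2 * m + 3),
      ((2 * m + 2).choose j : ℤ) * (j * (2 * m + 2 - j)) * |(m : ℤ) + 1 - j| ^ r
        = (2 * m + 2) * (2 * m + 1) * S r m := by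
    have h := sum_choose_mul_mul_sub (2 * m) fun j => |(m : ℤ) + 1 - j| ^ r
    push_cast at h
    rw [h, S]
    ring_nf
  rw [← hshift, S, S, show 2 * (m + 1) + 1 = 2 * m + 3 by ring,
    show 2 * (m + 1) = 2 * m + 2 by ring, mul_sum, ← sum_sub_distrib]
  refine sum_congr rfl fun j _ => ?_
  rw [pow_add, sq_abs]
  push_cast
  ring

theorem stmt_5 :
    ∀ r : ℕ, Odd r → 1 ≤ r → ∀ n : ℕ, 1 ≤ n →
      S (r + 2) n = (n : ℤ) ^ 2 * S r n - 2 * (n : ℤ) * (2 * (n : ℤ) - 1) * S r (n - 1) := by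
  intro r _ _ n hn
  obtain ⟨m, rfl⟩ : ∃ m, n = m + 1 := ⟨n - 1, by omega⟩
  rw [S_add_two, Nat.add_sub_cancel]
  push_cast
  ring
end

section
/- For every j ≥ 1, the diagonal coefficient satisfies c(j,j) = j!, where c(j,k) = (j!/(2j−1)!)·∑_{q=1}^{j} (−1)^{q+j} B(j,q) q^{2k−1} with B(j,q) = (q/j)·C(2j, j−q). -/
open Finset

theorem sum_range_two_mul_add_one_eq_add_sum_Icc {M : Type*} [AddCommMonoid M] (f : ℕ → M)
    (j : ℕ) : ∑ k ∈ range (2 * j + 1), f k = f j + ∑ q ∈ Icc 1 j, (f (j - q) + f (j + q)) := by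
  rw [← Ico_add_one_right_eq_Icc, sum_Ico_eq_sum_range, sum_add_distrib,
    show 2 * j + 1 = (j + 1) + j by ring, sum_range_add, ← sum_range_reflect f (j + 1),
    sum_range_succ']
  simp only [add_tsub_cancel_right, tsub_zero]
  rw [add_comm (∑ k ∈ range j, f (j - (k + 1))), add_assoc]
  simp only [add_comm 1, add_assoc]

theorem sum_range_alternating_choose_mul_add_pow_self {R : Type*} [CommRing R] (n : ℕ) (y : R) :
    ∑ k ∈ range (n + 1), (-1 : R) ^ (n - k) * n.choose k * (y + k) ^ n = n.factorial := by
  have h := fwdDiff_iter_eq_sum_shift (h := 1) (fun r : R ↦ r ^ n) n y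
  rw [fwdDiff_iter_eq_factorial] at h
  simpa [zsmul_eq_mul] using h.symm

theorem two_mul_sum_Icc_alternating_choose_mul_pow {R : Type*} [CommRing R] {j : ℕ} (hj : 1 ≤ j) :
    2 * ∑ q ∈ Icc 1 j, (-1 : R) ^ (q + j) * (2 * j).choose (j - q) * (q : R) ^ (2 * j)
      = (2 * j).factorial := by
  rw [← sum_range_alternating_choose_mul_add_pow_self (2 * j) (-j : R),
    sum_range_two_mul_add_one_eq_add_sum_Icc, neg_add_cancel, zero_pow (by omega), mul_zero,
    zero_add, mul_sum]
  refine sum_congr rfl fun q hq ↦ ?_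
  obtain ⟨-, hqj⟩ := mem_Icc.mp hq
  have hlow : 2 * j - (j - q) = q + j := by omega
  have hhigh : (-1 : R) ^ (2 * j - (j + q)) = (-1) ^ (q + j) := by
    rw [show q + j = 2 * j - (j + q) + 2 * q by omega, pow_add, pow_mul, neg_one_sq, one_pow,
      mul_one]
  rw [hlow, hhigh, Nat.choose_symm_of_eq_add (show 2 * j = (j + q) + (j - q) by omega),
    Nat.cast_sub hqj, Nat.cast_add, show -(j : R) + (j - q) = -q by ring,
    show -(j : R) + (j + q) = q by ring, (even_two_mul j).neg_pow]
  ring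

theorem sum_Icc_catalanTriangle_mul_pow {j : ℕ} (hj : 1 ≤ j) :
    ∑ q ∈ Icc 1 j, (-1 : ℚ) ^ (q + j) * catalanTriangle j q * (q : ℚ) ^ (2 * j - 1)
      = (2 * j - 1).factorial := by
  have hj0 : (j : ℚ) ≠ 0 := by positivity
  have hfact : ((2 * j).factorial : ℚ) = 2 * j * (2 * j - 1).factorial := by
    rw [← Nat.mul_factorial_pred (by omega : 2 * j ≠ 0)]
    push_cast
    ring
  have hterm : ∀ q ∈ Icc 1 j, (-1 : ℚ) ^ (q + j) * catalanTriangle j q * (q : ℚ) ^ (2 * j - 1)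
      = (-1 : ℚ) ^ (q + j) * (2 * j).choose (j - q) * (q : ℚ) ^ (2 * j) / j := by
    intro q _
    rw [catalanTriangle, show 2 * j = 2 * j - 1 + 1 by omega, pow_succ, Nat.add_sub_cancel]
    field_simp
  rw [sum_congr rfl hterm, ← sum_div]
  have hsum := two_mul_sum_Icc_alternating_choose_mul_pow (R := ℚ) hj
  rw [hfact] at hsum
  field_simp
  linarith

theorem stmt_7 :
    ∀ j : ℕ, 1 ≤ j → tuenterCoeff j j = (Nat.factorial j : ℚ) := by
  intro j hj
  rw [tuenterCoeff, sum_Icc_catalanTriangle_mul_pow hj, div_mul_cancel₀]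
  positivity
end

section
/- For every integer j ≥ 1, F_2(j) = (1/360)·j(j+1)(j+2)(2j+1)(2j+3)(5j−1), where F_2(j) = 1 + ∑_{2≤λ_1≤j} λ_1² + ∑_{2≤λ_1≤λ_2≤j} λ_1²λ_2². -/
/-- `F k j = ∑_{i=0}^{k} ∑_{2 ≤ λ₁ ≤ ⋯ ≤ λᵢ ≤ j} λ₁² ⋯ λᵢ²`, where the inner sum runs over
weakly increasing `i`-tuples with entries in `[2, j]`, encoded as multisets of size `i`
with elements in `Finset.Icc 2 j`; the `i = 0` term is `1`. -/
def F (k j : ℕ) : ℕ :=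
  ∑ i ∈ Finset.range (k + 1),
    ∑ m ∈ (Finset.Icc 2 j).sym i, ((m : Multiset ℕ).map (fun x => x ^ 2)).prod

/-! Adding the point `j + 1` to `[2, j]` gives the recurrence
`F (k + 1) (j + 1) = F (k + 1) j + (j + 1)² F k (j + 1)`: a tuple over `[2, j + 1]` either avoids
`j + 1`, or is a shorter tuple over `[2, j + 1]` with one more `j + 1` appended. With `F k 1 = 1`,
two inductions on `j` give first `F 1 j = j(j+1)(2j+1)/6` and then the closed form of `F 2 j`. -/

namespace Finset

variable {α R : Type*} [DecidableEq α] [CommSemiring R]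

/-- The complete homogeneous symmetric polynomial `h_n` evaluated at the family `(f a)_{a ∈ s}`. -/
def completeHomogeneous (s : Finset α) (n : ℕ) (f : α → R) : R :=
  ∑ m ∈ s.sym n, ((m : Multiset α).map f).prod

@[simp]
theorem completeHomogeneous_zero (s : Finset α) (f : α → R) : s.completeHomogeneous 0 f = 1 := by
  rw [completeHomogeneous, sym_zero, sum_singleton]
  rfl

@[simp]
theorem completeHomogeneous_empty_succ (n : ℕ) (f : α → R) :
    (∅ : Finset α).completeHomogeneous (n + 1) f = 0 := by
  simp [completeHomogeneous]

theorem completeHomogeneous_insert {a : α} {s : Finset α} (h : a ∉ s) (n : ℕ) (f : α → R) :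
    (insert a s).completeHomogeneous n f
      = ∑ i ∈ range (n + 1), f a ^ i * s.completeHomogeneous (n - i) f := by
  have prod_fill (i : Fin (n + 1)) (m : Sym α (n - i)) :
      ((m.fill a i : Multiset α).map f).prod = f a ^ (i : ℕ) * ((m : Multiset α).map f).prod := by
    rw [Sym.coe_fill, Multiset.map_add, Multiset.prod_add, Sym.coe_replicate,
      Multiset.map_replicate, Multiset.prod_replicate, mul_comm]
  rw [completeHomogeneous, ← sum_coe_sort, ← (symInsertEquiv h).symm.sum_comp,
    Fintype.sum_sigma, ← Fin.sum_univ_eq_sum_range]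
  refine Fintype.sum_congr _ _ fun i => ?_
  simp only [symInsertEquiv_symm_apply_coe, prod_fill, completeHomogeneous, mul_sum]
  exact sum_coe_sort (s.sym (n - i)) fun m => f a ^ (i : ℕ) * ((m : Multiset α).map f).prod

theorem completeHomogeneous_insert_succ {a : α} {s : Finset α} (h : a ∉ s) (n : ℕ)
    (f : α → R) :
    (insert a s).completeHomogeneous (n + 1) f
      = s.completeHomogeneous (n + 1) f + f a * (insert a s).completeHomogeneous n f := by
  rw [completeHomogeneous_insert h, completeHomogeneous_insert h, sum_range_succ', mul_sum]
  simp only [pow_succ', mul_assoc, Nat.succ_sub_succ, pow_zero, one_mul, Nat.sub_zero]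
  ring

end Finset

open Finset

theorem F_eq_sum_completeHomogeneous (k j : ℕ) :
    F k j = ∑ i ∈ range (k + 1), (Icc 2 j).completeHomogeneous i (· ^ 2) :=
  rfl

theorem F_zero (j : ℕ) : F 0 j = 1 := by
  simp [F_eq_sum_completeHomogeneous]

theorem F_one_right (k : ℕ) : F k 1 = 1 := by
  rw [F_eq_sum_completeHomogeneous, sum_range_succ', Icc_eq_empty (by norm_num)]
  simp

theorem F_succ_succ (k : ℕ) {j : ℕ} (hj : 1 ≤ j) :
    F (k + 1) (j + 1) = F (k + 1) j + (j + 1) ^ 2 * F k (j + 1) := by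
  have hnot : j + 1 ∉ Icc 2 j := by simp
  rw [F_eq_sum_completeHomogeneous, F_eq_sum_completeHomogeneous, F_eq_sum_completeHomogeneous,
    ← insert_Icc_right_eq_Icc_add_one (by omega : 2 ≤ j + 1), sum_range_succ' _ (k + 1),
    sum_range_succ' _ (k + 1), mul_sum]
  simp only [completeHomogeneous_insert_succ hnot, sum_add_distrib, completeHomogeneous_zero]
  ring

theorem F_one {j : ℕ} (hj : 1 ≤ j) : (F 1 j : ℚ) = j * (j + 1) * (2 * j + 1) / 6 := by
  induction j, hj using Nat.le_induction with
  | base => norm_num [F_one_right]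
  | succ j hj ih =>
    rw [F_succ_succ 0 hj, F_zero]
    push_cast [ih]
    ring

theorem stmt_17 :
    ∀ j : ℕ, 1 ≤ j →
      (F 2 j : ℚ) = (1 / 360) * (j : ℚ) * ((j : ℚ) + 1) * ((j : ℚ) + 2) *
        (2 * (j : ℚ) + 1) * (2 * (j : ℚ) + 3) * (5 * (j : ℚ) - 1) := by
  intro j hj
  induction j, hj using Nat.le_induction with
  | base => norm_num [F_one_right]
  | succ j hj ih =>
    rw [F_succ_succ 1 hj]
    push_cast [ih, F_one (Nat.le_add_left 1 j)]
    ring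
end
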